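/- arXiv:2401.01390 — 4 statements merged into one kernel-verified Lean document; each statement's English description precedes it below -/
import Mathlib

section
/- Let X be a Banach space, T a bounded operator on X such that T² − T has finite rank. Then there exists an idempotent bounded operator P on X such that T − P has finite rank. -/
/-!
`N = T² - T` has finite rank, so it is algebraic: if `q` annihilates the restriction of `N` to its
finite-dimensional range, then `X q` annihilates `N`. Hence `T` is algebraic, say `m(T) = 0` with
`m ≠ 0`. By the Chinese remainder theorem in `ℂ[X]` there is `f` with `f² ≡ f` modulo `m` and
`X - f = X (X - 1) g`. Then `P = f(T)` is idempotent and `T - P = N g(T)` has range inside that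
of `N`.
-/

open Polynomial

theorem IsCoprime.exists_idempotent_mod {R : Type*} [CommRing R] {a b : R} (h : IsCoprime a b) :
    ∃ e : R, a * b ∣ e * e - e ∧ a ∣ e - 1 ∧ b ∣ e := by
  obtain ⟨u, v, huv⟩ := h
  exact ⟨v * b, ⟨-(u * v), by linear_combination (v * b) * huv⟩, ⟨-u, by linear_combination huv⟩,
    dvd_mul_left b v⟩

theorem Polynomial.exists_dvd_mul_self_sub_self_and_dvd_X_sub {K : Type*} [Field K] {m : K[X]}
    (hm : m ≠ 0) : ∃ f : K[X], m ∣ f * f - f ∧ X * (X - 1) ∣ X - f := by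
  have hX1 : IsCoprime (X : K[X]) (X - C 1) := by
    simpa using isCoprime_X_sub_C_of_isUnit_sub (R := K) (a := 0) (b := 1) (by simp)
  have hM : m * (X * (X - C 1)) ≠ 0 := mul_ne_zero hm (mul_ne_zero X_ne_zero (X_sub_C_ne_zero 1))
  have hμ : (m * (X * (X - C 1))).rootMultiplicity 1 ≠ 0 := by
    rw [← pos_iff_ne_zero, rootMultiplicity_pos hM]
    simp
  obtain ⟨B, hMB, hB⟩ := (m * (X * (X - C 1))).exists_eq_pow_rootMultiplicity_mul_and_not_dvd hM 1
  generalize (m * (X * (X - C 1))).rootMultiplicity 1 = μ at hμ hMB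
  have hXB : X ∣ B := by
    refine hX1.pow_right (n := μ).dvd_of_dvd_mul_left ?_
    rw [← hMB]
    exact Dvd.intro (m * (X - C 1)) (by ring)
  have hAB : IsCoprime ((X - C 1) ^ μ) B :=
    ((irreducible_X_sub_C (1 : K)).coprime_iff_not_dvd.2 hB).pow_left
  obtain ⟨e, hABe, hA, hBe⟩ := hAB.exists_idempotent_mod
  -- `e ≡ 1` mod `(X - 1)^μ` and `e ≡ 0` mod `B`, a multiple of `X`: so `e ≡ X` mod `X (X - 1)`
  refine ⟨e, (dvd_mul_right m _).trans (hMB ▸ hABe), ?_⟩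
  rw [← C_1]
  refine hX1.mul_dvd (dvd_sub dvd_rfl (hXB.trans hBe)) ?_
  have hA' : X - C 1 ∣ e - 1 := (dvd_pow_self _ hμ).trans hA
  simpa [C_1] using dvd_sub (dvd_refl (X - C 1 : K[X])) hA'

theorem exists_isIdempotentElem_sub_eq_mul {K A : Type*} [Field K] [Ring A] [Algebra K A] {a : A}
    (ha : IsAlgebraic K (a * a - a)) :
    ∃ p : A, IsIdempotentElem p ∧ ∃ b, a - p = (a * a - a) * b := by
  have hquad : aeval a (X * (X - 1) : K[X]) = a * a - a := by simp [mul_sub]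
  have hmonic : (X * (X - 1) : K[X]).Monic := monic_X.mul (by simpa using monic_X_sub_C (1 : K))
  have hdeg : (X * (X - 1) : K[X]).natDegree = 2 := by compute_degree!
  obtain ⟨m, hm0, hm⟩ : IsAlgebraic K a :=
    .of_aeval _ (by rw [hdeg]; norm_num) (by simp [hmonic.leadingCoeff]) (hquad ▸ ha)
  obtain ⟨f, ⟨c, hc⟩, ⟨g, hg⟩⟩ := exists_dvd_mul_self_sub_self_and_dvd_X_sub hm0
  refine ⟨aeval a f, ?_, aeval a g, ?_⟩
  · rw [IsIdempotentElem, ← sub_eq_zero, ← map_mul, ← map_sub, hc, map_mul, hm, zero_mul]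
  · simpa only [map_sub, map_mul, aeval_X, hquad] using congrArg (aeval a) hg

section FiniteRank

variable {K : Type*} [Field K]

theorem Module.End.aeval_restrict_apply {V : Type*} [AddCommGroup V] [Module K V]
    {f : Module.End K V} {p : Submodule K V} (hf : ∀ x ∈ p, f x ∈ p) (q : K[X]) (x : p) :
    (aeval (f.restrict hf) q x : V) = aeval f q x := by
  induction q using Polynomial.induction_on generalizing x with
  | C a => simp [Algebra.algebraMap_eq_smul_one]
  | add q r hq hr => simp [hq, hr]
  | monomial n a ih =>
    simp only [pow_succ, ← mul_assoc, map_mul, aeval_X, Module.End.mul_apply] at ih ⊢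
    rw [ih]
    rfl

theorem Module.End.isAlgebraic_of_finiteDimensional_range {V : Type*} [AddCommGroup V]
    [Module K V] (f : Module.End K V) [FiniteDimensional K (LinearMap.range f)] :
    IsAlgebraic K f := by
  have hf : ∀ x ∈ LinearMap.range f, f x ∈ LinearMap.range f :=
    fun x _ ↦ LinearMap.mem_range_self f x
  obtain ⟨q, hq0, hq⟩ := (Algebra.IsIntegral.isIntegral (R := K) (f.restrict hf)).isAlgebraic
  refine ⟨q * X, mul_ne_zero hq0 X_ne_zero, LinearMap.ext fun x ↦ ?_⟩
  have := aeval_restrict_apply hf q ⟨f x, LinearMap.mem_range_self f x⟩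
  rw [hq] at this
  simpa using this.symm

theorem ContinuousLinearMap.isAlgebraic_of_finiteDimensional_range {E : Type*}
    [TopologicalSpace E] [AddCommGroup E] [Module K E] [IsTopologicalAddGroup E]
    [ContinuousConstSMul K E] (f : E →L[K] E)
    [FiniteDimensional K (LinearMap.range (f : E →ₗ[K] E))] :
    IsAlgebraic K f :=
  (Module.End.isAlgebraic_of_finiteDimensional_range (f : E →ₗ[K] E)).of_ringHom_of_comp_eq
    (RingHom.id K) toLinearMapRingHom Function.surjective_id coe_injective rfl

end FiniteRank

theorem idempotent_lift_mod_finite_rank_general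
    {X : Type*} [NormedAddCommGroup X] [NormedSpace ℂ X]
    (T : X →L[ℂ] X)
    (hT : FiniteDimensional ℂ (LinearMap.range ((T ∘L T - T : X →L[ℂ] X) : X →ₗ[ℂ] X))) :
    ∃ P : X →L[ℂ] X, P ∘L P = P ∧ FiniteDimensional ℂ (LinearMap.range ((T - P : X →L[ℂ] X) : X →ₗ[ℂ] X)) := by
  obtain ⟨P, hP, B, hTP⟩ := exists_isIdempotentElem_sub_eq_mul
    (ContinuousLinearMap.isAlgebraic_of_finiteDimensional_range (T * T - T))
  refine ⟨P, hP, ?_⟩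
  rw [hTP]
  exact Submodule.finiteDimensional_of_le (LinearMap.range_comp_le_range _ _)

/-- Let `X` be a Banach space and `T` a bounded operator such that
`T² - T` has finite rank. Then there is an idempotent bounded operator `P` with
`T - P` of finite rank (idempotents in `L(X)/F₀(X)` lift to idempotents of `L(X)`). -/
theorem idempotent_lift_mod_finite_rank
    {X : Type*} [NormedAddCommGroup X] [NormedSpace ℂ X] [CompleteSpace X]
    (T : X →L[ℂ] X)
    (hT : FiniteDimensional ℂ (LinearMap.range ((T ∘L T - T : X →L[ℂ] X) : X →ₗ[ℂ] X))) :
    ∃ P : X →L[ℂ] X, P ∘L P = P ∧ FiniteDimensional ℂ (LinearMap.range ((T - P : X →L[ℂ] X) : X →ₗ[ℂ] X)) :=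
  idempotent_lift_mod_finite_rank_general T hT
end

section
/- Let X be a complex Banach space and T a bounded operator on X. If for every complex scalar λ ≠ 0 the operator T − λI is Fredholm, then for every complex scalar λ ≠ 0 the operator T − λI is Fredholm of index 0. -/
open ContinuousLinearMap

/-- A bounded operator is Fredholm if its kernel is finite dimensional and its range
is closed of finite codimension. -/
def IsFredholm {E : Type*} [NormedAddCommGroup E] [NormedSpace ℂ E] (T : E →L[ℂ] E) : Prop :=
  FiniteDimensional ℂ (LinearMap.ker (T : E →ₗ[ℂ] E)) ∧ IsClosed (LinearMap.range (T : E →ₗ[ℂ] E) : Set E) ∧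
    FiniteDimensional ℂ (E ⧸ LinearMap.range (T : E →ₗ[ℂ] E))

/-- The Fredholm index `dim N(T) - codim R(T)`. -/
noncomputable def fredInd {E : Type*} [NormedAddCommGroup E] [NormedSpace ℂ E]
    (T : E →L[ℂ] E) : ℤ :=
  (Module.finrank ℂ (LinearMap.ker (T : E →ₗ[ℂ] E)) : ℤ) - (Module.finrank ℂ (E ⧸ LinearMap.range (T : E →ₗ[ℂ] E)) : ℤ)

/-- A Riesz operator: `T - λ•I` is Fredholm for every nonzero scalar `λ`. -/
def IsRiesz {E : Type*} [NormedAddCommGroup E] [NormedSpace ℂ E] (T : E →L[ℂ] E) : Prop :=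
  ∀ c : ℂ, c ≠ 0 → _root_.IsFredholm (T - c • (1 : E →L[ℂ] E))

/-!
The Fredholm index is locally constant. If `M` is a closed complement of `ker T` and `N` a
complement of `range T`, then `(m, n) ↦ S m + n : M × N → E` is an isomorphism for `S = T`,
hence, invertibility being an open condition, for every `S` near `T`. For each such `S`, `ker S`
and `E ⧸ range S` are isomorphic to the kernel and cokernel of the map `E ⧸ M → E ⧸ S(M)`
induced by `S`, a map between spaces of dimensions `codim M` and `dim N`, so the index of `S` is
`codim M - dim N`. Hence `λ ↦ ind (T - λ)` is constant on the connected set `ℂ \ {0}`, and it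
vanishes at any `λ ≠ 0` outside the spectrum of `T`.
-/

open Module Submodule Topology

namespace LinearMap

variable {k V W : Type*} [Field k] [AddCommGroup V] [Module k V] [AddCommGroup W] [Module k W]
  {S : V →ₗ[k] W} {M : Submodule k V}

theorem bijective_coprod_subtype_iff {N : Submodule k W} :
    Function.Bijective ((S ∘ₗ M.subtype).coprod N.subtype) ↔
      Disjoint M (ker S) ∧ IsCompl (M.map S) N := by
  have hrange : range ((S ∘ₗ M.subtype).coprod N.subtype) = M.map S ⊔ N := by
    rw [range_coprod, range_comp, range_subtype, range_subtype]
  rw [Function.Bijective, ← ker_eq_bot, ← range_eq_top, hrange, ← codisjoint_iff, isCompl_iff,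
    ← and_assoc, and_congr_left_iff]
  intro _
  simp only [disjoint_def, mem_map, mem_ker]
  constructor
  · intro h
    refine ⟨fun x hxM hSx ↦ ?_, ?_⟩
    · simpa using h.le (x := (⟨x, hxM⟩, 0)) (by simpa using hSx)
    · rintro _ ⟨x, hxM, rfl⟩ hSxN
      obtain ⟨rfl, -⟩ : x = 0 ∧ S x = 0 := by
        simpa using h.le (x := (⟨x, hxM⟩, -⟨S x, hSxN⟩)) (by simp)
      exact map_zero S
  · rintro ⟨hM, hN⟩
    rw [eq_bot_iff]
    rintro ⟨⟨x, hxM⟩, ⟨y, hyN⟩⟩ hxy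
    have hSx : S x = -y := eq_neg_of_add_eq_zero_left hxy
    have hSx0 : S x = 0 := hN _ ⟨x, hxM, rfl⟩ (hSx ▸ N.neg_mem hyN)
    have hx0 : x = 0 := hM x hxM hSx0
    have hy0 : y = 0 := by simpa [hSx0] using hSx
    simp [hx0, hy0]

theorem ker_mapQ_map (S : V →ₗ[k] W) (M : Submodule k V) :
    ker (M.mapQ (M.map S) S (M.le_comap_map S)) = (ker S).map M.mkQ := by
  rw [ker_mapQ, comap_map_eq, Submodule.map_sup, mkQ_map_self, bot_sup_eq]

noncomputable def kerEquivKerMapQ (hMS : Disjoint M (ker S)) :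
    ker S ≃ₗ[k] ker (M.mapQ (M.map S) S (M.le_comap_map S)) :=
  (LinearEquiv.ofInjective (M.mkQ.domRestrict (ker S))
      (injective_domRestrict_iff.mpr (by rwa [ker_mkQ, disjoint_comm]))).trans
    (LinearEquiv.ofEq _ _ (by rw [range_domRestrict, ker_mapQ_map]))

noncomputable def quotRangeMapQEquiv (S : V →ₗ[k] W) (M : Submodule k V) :
    ((W ⧸ M.map S) ⧸ range (M.mapQ (M.map S) S (M.le_comap_map S))) ≃ₗ[k] W ⧸ range S :=
  (quotEquivOfEq _ _ (range_mapQ _ _ _ _)).trans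
    (quotientQuotientEquivQuotient _ _ map_le_range)

theorem finrank_ker_sub_finrank_quot_range [FiniteDimensional k (V ⧸ M)]
    [FiniteDimensional k (W ⧸ M.map S)] (hMS : Disjoint M (ker S)) :
    (finrank k (ker S) : ℤ) - finrank k (W ⧸ range S) =
      finrank k (V ⧸ M) - finrank k (W ⧸ M.map S) := by
  rw [(kerEquivKerMapQ hMS).finrank_eq, ← (quotRangeMapQEquiv S M).finrank_eq]
  have hA := (M.mapQ (M.map S) S (M.le_comap_map S)).finrank_range_add_finrank_ker
  have hQ := (range (M.mapQ (M.map S) S (M.le_comap_map S))).finrank_quotient_add_finrank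
  omega

end LinearMap

theorem Submodule.isClosed_map_of_isCompl {𝕜 E F : Type*}
    [NontriviallyNormedField 𝕜] [CompleteSpace 𝕜]
    [NormedAddCommGroup E] [NormedSpace 𝕜 E] [CompleteSpace E]
    [NormedAddCommGroup F] [NormedSpace 𝕜 F] [CompleteSpace F]
    {S : E →L[𝕜] F} {M : Submodule 𝕜 E} {N : Submodule 𝕜 F} [FiniteDimensional 𝕜 N]
    (hMc : IsClosed (M : Set E)) (hMS : Disjoint M (LinearMap.ker (S : E →ₗ[𝕜] F)))
    (hSMN : IsCompl (M.map (S : E →ₗ[𝕜] F)) N) :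
    IsClosed (M.map (S : E →ₗ[𝕜] F) : Set F) := by
  have : CompleteSpace M := hMc.completeSpace_coe
  have hrange : LinearMap.range ((S ∘L M.subtypeL : M →L[𝕜] F) : M →ₗ[𝕜] F) =
      M.map (S : E →ₗ[𝕜] F) := by
    change LinearMap.range ((S : E →ₗ[𝕜] F) ∘ₗ M.subtype) = _
    rw [LinearMap.range_comp, range_subtype]
  rw [← hrange] at hSMN ⊢
  refine (S ∘L M.subtypeL).closed_complemented_range_of_isCompl_of_ker_eq_bot N hSMN
    N.closed_of_finiteDimensional ?_
  change LinearMap.ker ((S : E →ₗ[𝕜] F) ∘ₗ M.subtype) = ⊥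
  rwa [LinearMap.ker_comp, ← disjoint_iff_comap_eq_bot]

theorem IsPreconnected.apply_eq_of_forall_eventually_eq {α β : Type*} [TopologicalSpace α]
    {s : Set α} (hs : IsPreconnected s) {f : α → β} (hf : ∀ x ∈ s, ∀ᶠ y in 𝓝 x, f y = f x)
    {x y : α} (hx : x ∈ s) (hy : y ∈ s) : f x = f y := by
  let _ : TopologicalSpace β := ⊥
  have : DiscreteTopology β := ⟨rfl⟩
  refine hs.constant (fun z hz ↦ ContinuousAt.continuousWithinAt ?_) hx hy
  exact (Filter.tendsto_pure.mpr (hf z hz)).mono_right (pure_le_nhds _)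

theorem spectrum.exists_ne_zero_notMem (𝕜 : Type*) {A : Type*} [NontriviallyNormedField 𝕜]
    [NormedRing A] [NormedAlgebra 𝕜 A] [CompleteSpace A] (a : A) :
    ∃ z : 𝕜, z ≠ 0 ∧ z ∉ spectrum 𝕜 a := by
  obtain ⟨z, hz⟩ := NormedField.exists_lt_norm 𝕜 (‖a‖ * ‖(1 : A)‖)
  refine ⟨z, norm_pos_iff.mp (lt_of_le_of_lt (by positivity) hz), fun hmem ↦ ?_⟩
  have := spectrum.subset_closedBall_norm_mul a hmem
  rw [Metric.mem_closedBall, dist_zero_right] at this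
  linarith

section Fredholm

variable {E : Type*} [NormedAddCommGroup E] [NormedSpace ℂ E]

theorem fredInd_eq_zero_of_bijective {S : E →L[ℂ] E} (hS : Function.Bijective S) :
    fredInd S = 0 := by
  rw [fredInd, LinearMap.ker_eq_bot.mpr hS.1, LinearMap.range_eq_top.mpr hS.2]
  simp [finrank_zero_of_subsingleton]

variable [CompleteSpace E]

theorem isFredholm_and_fredInd_eq_of_isCompl_map {S : E →L[ℂ] E} {M N : Submodule ℂ E}
    [FiniteDimensional ℂ (E ⧸ M)] [FiniteDimensional ℂ N] (hMc : IsClosed (M : Set E))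
    (hMS : Disjoint M (LinearMap.ker (S : E →ₗ[ℂ] E)))
    (hSMN : IsCompl (M.map (S : E →ₗ[ℂ] E)) N) :
    _root_.IsFredholm S ∧ fredInd S = finrank ℂ (E ⧸ M) - finrank ℂ N := by
  have : FiniteDimensional ℂ (E ⧸ M.map (S : E →ₗ[ℂ] E)) :=
    (quotientEquivOfIsCompl _ _ hSMN).symm.finiteDimensional
  refine ⟨⟨(LinearMap.kerEquivKerMapQ hMS).symm.finiteDimensional,
    isClosed_mono_of_finiteDimensional_quotient (isClosed_map_of_isCompl hMc hMS hSMN)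
      LinearMap.map_le_range, CoFG.of_le LinearMap.map_le_range this⟩, ?_⟩
  rw [fredInd, LinearMap.finrank_ker_sub_finrank_quot_range hMS,
    (quotientEquivOfIsCompl _ _ hSMN).finrank_eq]

theorem IsFredholm.eventually_fredInd_eq {T : E →L[ℂ] E} (hT : _root_.IsFredholm T) :
    ∀ᶠ S in 𝓝 T, _root_.IsFredholm S ∧ fredInd S = fredInd T := by
  obtain ⟨_, -, _⟩ := hT
  obtain ⟨M, hMc, hKM⟩ :=
    (ClosedComplemented.of_finiteDimensional
      (LinearMap.ker (T : E →ₗ[ℂ] E))).exists_isClosed_isCompl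
  obtain ⟨N, hRN⟩ := (LinearMap.range (T : E →ₗ[ℂ] E)).exists_isCompl
  have : FiniteDimensional ℂ (E ⧸ M) :=
    (quotientEquivOfIsCompl M _ hKM.symm).symm.finiteDimensional
  have : FiniteDimensional ℂ N := (quotientEquivOfIsCompl _ N hRN).finiteDimensional
  have : CompleteSpace M := hMc.completeSpace_coe
  let Φ : (E →L[ℂ] E) → (M × N →L[ℂ] E) := fun S ↦ (S ∘L M.subtypeL).coprod N.subtypeL
  have hΦ : Continuous Φ := by fun_prop
  have hΦ_index : ∀ S, Function.Bijective (Φ S) →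
      _root_.IsFredholm S ∧ fredInd S = finrank ℂ (E ⧸ M) - finrank ℂ N := fun S hS ↦
    have ⟨hMS, hSMN⟩ := LinearMap.bijective_coprod_subtype_iff.mp hS
    isFredholm_and_fredInd_eq_of_isCompl_map hMc hMS hSMN
  have hTbij : Function.Bijective (Φ T) := LinearMap.bijective_coprod_subtype_iff.mpr
    ⟨hKM.symm.disjoint, map_eq_range_iff.mpr hKM.symm.codisjoint ▸ hRN⟩
  let e := ContinuousLinearEquiv.ofBijective (Φ T)
    (LinearMap.ker_eq_bot.mpr hTbij.1) (LinearMap.range_eq_top.mpr hTbij.2)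
  filter_upwards [hΦ.continuousAt.preimage_mem_nhds e.nhds] with S ⟨eS, heS⟩
  obtain ⟨hS, hS_index⟩ := hΦ_index S (heS ▸ eS.bijective)
  exact ⟨hS, hS_index.trans (hΦ_index T hTbij).2.symm⟩

end Fredholm

/-- If `T - λI` is Fredholm for every nonzero scalar `λ` (i.e. `T` is a
Riesz operator), then `T - λI` is Fredholm of index `0` for every nonzero `λ`. -/
theorem riesz_index_zero
    {X : Type*} [NormedAddCommGroup X] [NormedSpace ℂ X] [CompleteSpace X]
    (T : X →L[ℂ] X) (hT : IsRiesz T) :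
    ∀ c : ℂ, c ≠ 0 → _root_.IsFredholm (T - c • (1 : X →L[ℂ] X)) ∧
      fredInd (T - c • (1 : X →L[ℂ] X)) = 0 := by
  intro c hc
  refine ⟨hT c hc, ?_⟩
  obtain ⟨z, hz0, hzT⟩ := spectrum.exists_ne_zero_notMem ℂ T
  have hunit : IsUnit (T - z • (1 : X →L[ℂ] X)) := by
    simpa [Algebra.algebraMap_eq_smul_one] using (spectrum.notMem_iff.mp hzT).neg
  have hlocal : ∀ a ∈ ({0}ᶜ : Set ℂ), ∀ᶠ b in 𝓝 a,
      fredInd (T - b • (1 : X →L[ℂ] X)) = fredInd (T - a • (1 : X →L[ℂ] X)) := fun a ha ↦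
    (((continuous_const.sub (continuous_id.smul continuous_const)).tendsto a).eventually
      (hT a ha).eventually_fredInd_eq).mono fun _ h ↦ h.2
  have hpunctured : IsPreconnected ({0}ᶜ : Set ℂ) :=
    (isConnected_compl_singleton_of_one_lt_rank
      (by simp [Complex.rank_real_complex]) 0).isPreconnected
  calc fredInd (T - c • (1 : X →L[ℂ] X)) = fredInd (T - z • (1 : X →L[ℂ] X)) :=
        hpunctured.apply_eq_of_forall_eventually_eq hlocal hc hz0
    _ = 0 := fredInd_eq_zero_of_bijective (ContinuousLinearMap.isUnit_iff_bijective.mp hunit)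
end

section
/- Let X be a Banach space with decomposition X = X₁ ⊕ X₂ induced by an idempotent P, and let T be a bounded operator commuting with P, T = T₁ ⊕ T₂. If T₁ is a Riesz operator and T₂ is an upper semi-Fredholm operator admitting a left inverse modulo finite rank operators, then T + P admits a left inverse modulo finite rank operators on X: there exist S and finite rank F with S(T + P) = I + F. -/
open ContinuousLinearMap

/-- Restriction of an operator to an invariant subspace. -/
def restrictCLM {E : Type*} [NormedAddCommGroup E] [NormedSpace ℂ E] (T : E →L[ℂ] E)
    (M : Submodule ℂ E) (h : ∀ x : M, T ↑x ∈ M) : M →L[ℂ] M :=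
  (T.comp M.subtypeL).codRestrict M h

/-- A finite rank operator. -/
def FinRank {E : Type*} [NormedAddCommGroup E] [NormedSpace ℂ E] (F : E →L[ℂ] E) : Prop :=
  FiniteDimensional ℂ (LinearMap.range (F : E →ₗ[ℂ] E))

/-- An operator commuting with `P` leaves the range of `P` invariant. -/
lemma rangeInv {E : Type*} [NormedAddCommGroup E] [NormedSpace ℂ E] {P T : E →L[ℂ] E}
    (hc : T ∘L P = P ∘L T) : ∀ x : LinearMap.range (P : E →ₗ[ℂ] E), T ↑x ∈ LinearMap.range (P : E →ₗ[ℂ] E) := by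
  rintro ⟨_, y, rfl⟩
  exact ⟨T y, by simpa using (DFunLike.congr_fun hc y).symm⟩

/-- An operator commuting with `P` leaves the kernel of `P` invariant. -/
lemma kerInv {E : Type*} [NormedAddCommGroup E] [NormedSpace ℂ E] {P T : E →L[ℂ] E}
    (hc : T ∘L P = P ∘L T) : ∀ x : LinearMap.ker (P : E →ₗ[ℂ] E), T ↑x ∈ LinearMap.ker (P : E →ₗ[ℂ] E) := by
  rintro ⟨x, hx⟩
  have h1 : T (P x) = P (T x) := DFunLike.congr_fun hc x
  simp only [LinearMap.mem_ker] at hx ⊢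
  simp only [ContinuousLinearMap.coe_coe] at *
  rw [← h1, hx, map_zero]

/-- `P T P` leaves the range of `P` invariant. -/
lemma rangeInvQuad {E : Type*} [NormedAddCommGroup E] [NormedSpace ℂ E] (P T : E →L[ℂ] E) :
    ∀ x : LinearMap.range (P : E →ₗ[ℂ] E), (P ∘L T ∘L P) ↑x ∈ LinearMap.range (P : E →ₗ[ℂ] E) :=
  fun x => ⟨T (P ↑x), rfl⟩

/-- `(I-P) T (I-P)` leaves the kernel of `P` invariant when `P` is idempotent. -/
lemma kerInvQuad {E : Type*} [NormedAddCommGroup E] [NormedSpace ℂ E] {P : E →L[ℂ] E}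
    (hP : P ∘L P = P) (T : E →L[ℂ] E) :
    ∀ x : LinearMap.ker (P : E →ₗ[ℂ] E), (((1 : E →L[ℂ] E) - P) ∘L T ∘L ((1 : E →L[ℂ] E) - P)) ↑x ∈
      LinearMap.ker (P : E →ₗ[ℂ] E) := by
  intro x
  have h : ∀ z, P (((1 : E →L[ℂ] E) - P) z) = 0 := by
    intro z
    have h2 : P (P z) = P z := DFunLike.congr_fun hP z
    simp [ContinuousLinearMap.sub_apply, h2]
  exact LinearMap.mem_ker.mpr (h _)

/-! Since `T` commutes with `P`, the operator `T + P` acts as `T₁ + I` on `R(P)` and as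
`T₂` on `N(P)`. Because `T₁` is Riesz, `T₁ + I` is Fredholm, and a Fredholm operator `A` on a
Banach space has a left inverse modulo the projection onto its kernel: by the open mapping
theorem, `A` restricted to a closed complement of its kernel is an isomorphism onto its range,
which is complemented. Gluing this with the given left inverse of `T₂` along
`X = R(P) ⊕ N(P)` gives the left inverse of `T + P`; the two finite rank errors add up to a
finite rank error. -/

section LeftInverse

variable {𝕜 E F : Type*} [NontriviallyNormedField 𝕜] [NormedAddCommGroup E] [NormedSpace 𝕜 E]
  [CompleteSpace E] [NormedAddCommGroup F] [NormedSpace 𝕜 F] [CompleteSpace F]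

theorem ContinuousLinearMap.exists_sub_apply_mem_ker {A : E →L[𝕜] F}
    (hker : A.ker.ClosedComplemented) (hran : A.range.ClosedComplemented) :
    ∃ S : F →L[𝕜] E, ∀ x, x - S (A x) ∈ A.ker := by
  obtain ⟨C, hC⟩ := hker.exists_isTopCompl
  have : CompleteSpace C := hC.symm.isClosed.completeSpace_coe
  set ψ := C.projectionOntoL A.ker hC.symm
  have hψ : ∀ x, (ψ x : E) = x - A.ker.projectionL C hC x :=
    Submodule.projectionL_eq_self_sub_projectionL hC
  have hAψ : (A ∘L C.subtypeL) ∘L ψ = A := by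
    ext x
    have : A (A.ker.projectionL C hC x) = 0 := Submodule.projectionL_apply_mem hC x
    simp only [comp_apply, Submodule.subtypeL_apply, hψ, map_sub, this, sub_zero]
  have hinj : Function.Injective (A ∘L C.subtypeL) := by
    refine (injective_iff_map_eq_zero _).2 fun c hc => ?_
    exact Subtype.ext (Submodule.disjoint_def.mp hC.isCompl.disjoint c hc c.2)
  have hrange : (A ∘L C.subtypeL).range = A.range := by
    conv_rhs => rw [← hAψ]
    exact (LinearMap.range_comp_of_range_eq_top _ (Submodule.range_projectionOntoL hC.symm)).symm
  have hran' : (A ∘L C.subtypeL).range.ClosedComplemented := hrange ▸ hran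
  obtain ⟨S, hS⟩ := HasLeftInverse.of_injective_of_isClosed_range_of_closedComplement_range hinj
    (LinearMap.coe_range (A ∘L C.subtypeL : C →ₗ[𝕜] F) ▸ hran'.isClosed) hran'
  refine ⟨C.subtypeL ∘L S, fun x => ?_⟩
  have hSA : S (A x) = ψ x := by
    rw [← hAψ]; exact hS (ψ x)
  rw [comp_apply, Submodule.subtypeL_apply, hSA, hψ, sub_sub_cancel]
  exact Submodule.projectionL_apply_mem hC x

end LeftInverse

section Fredholm

variable {X : Type*} [NormedAddCommGroup X] [NormedSpace ℂ X]

def HasLeftInverseModFinRank (A : X →L[ℂ] X) : Prop :=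
  ∃ S F : X →L[ℂ] X, FinRank F ∧ S ∘L A = 1 + F

theorem FinRank.add {F G : X →L[ℂ] X} (hF : FinRank F) (hG : FinRank G) : FinRank (F + G) :=
  have : FiniteDimensional ℂ (F : X →ₗ[ℂ] X).range := hF
  have : FiniteDimensional ℂ (G : X →ₗ[ℂ] X).range := hG
  Submodule.finiteDimensional_of_le (LinearMap.range_add_le (F : X →ₗ[ℂ] X) G)

theorem FinRank.subtypeL_comp_comp {M : Submodule ℂ X} {F : M →L[ℂ] M} (hF : FinRank F)
    (π : X →L[ℂ] M) : FinRank (M.subtypeL ∘L F ∘L π) := by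
  have : FiniteDimensional ℂ (F : M →ₗ[ℂ] M).range := hF
  have : FiniteDimensional ℂ ((F : M →ₗ[ℂ] M).range.map M.subtype) := Module.Finite.map _ _
  refine Submodule.finiteDimensional_of_le (?_ : _ ≤ (F : M →ₗ[ℂ] M).range.map M.subtype)
  rintro _ ⟨x, rfl⟩
  exact ⟨F (π x), ⟨π x, rfl⟩, rfl⟩

theorem IsFredholm.hasLeftInverseModFinRank [CompleteSpace X] {A : X →L[ℂ] X}
    (hA : _root_.IsFredholm A) : HasLeftInverseModFinRank A := by
  obtain ⟨hker, hcl, hcoker⟩ := hA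
  obtain ⟨S, hS⟩ := A.exists_sub_apply_mem_ker (.of_finiteDimensional _)
    (.of_finiteDimensional_quotient hcl)
  refine ⟨S, S ∘L A - 1, Submodule.finiteDimensional_of_le (?_ : _ ≤ A.ker), by abel⟩
  rintro _ ⟨x, rfl⟩
  simpa using neg_mem (hS x)

theorem IsRiesz.isFredholm_add_one {T : X →L[ℂ] X} (hT : IsRiesz T) :
    _root_.IsFredholm (T + 1) := by
  simpa [sub_eq_add_neg] using hT (-1) (by norm_num)

end Fredholm

section Decomposition

variable {X : Type*} [NormedAddCommGroup X] [NormedSpace ℂ X] {P A : X →L[ℂ] X}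

theorem HasLeftInverseModFinRank.of_restrict_range_ker (hP : P ∘L P = P)
    (hc : A ∘L P = P ∘L A)
    (h₁ : HasLeftInverseModFinRank (restrictCLM A (LinearMap.range (P : X →ₗ[ℂ] X)) (rangeInv hc)))
    (h₂ : HasLeftInverseModFinRank (restrictCLM A (LinearMap.ker (P : X →ₗ[ℂ] X)) (kerInv hc))) :
    HasLeftInverseModFinRank A := by
  set X₁ := LinearMap.range (P : X →ₗ[ℂ] X)
  set X₂ := LinearMap.ker (P : X →ₗ[ℂ] X)
  have hPP (x : X) : P (P x) = P x := congr($hP x)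
  have hAP (x : X) : A (P x) = P (A x) := congr($hc x)
  let π₁ : X →L[ℂ] X₁ := P.codRestrict X₁ fun x => ⟨x, rfl⟩
  let π₂ : X →L[ℂ] X₂ := (1 - P).codRestrict X₂ fun x => by simp [X₂, hPP]
  have hπ₁ : π₁ ∘L A = restrictCLM A X₁ (rangeInv hc) ∘L π₁ := by
    ext x; exact (hAP x).symm
  have hπ₂ : π₂ ∘L A = restrictCLM A X₂ (kerInv hc) ∘L π₂ := by
    ext x
    show A x - P (A x) = A (x - P x)
    rw [map_sub, hAP]
  have hπ : X₁.subtypeL ∘L π₁ + X₂.subtypeL ∘L π₂ = 1 := by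
    ext x
    exact add_sub_cancel (P x) x
  obtain ⟨S₁, F₁, hF₁, hS₁⟩ := h₁
  obtain ⟨S₂, F₂, hF₂, hS₂⟩ := h₂
  refine ⟨X₁.subtypeL ∘L S₁ ∘L π₁ + X₂.subtypeL ∘L S₂ ∘L π₂,
    X₁.subtypeL ∘L F₁ ∘L π₁ + X₂.subtypeL ∘L F₂ ∘L π₂,
    (hF₁.subtypeL_comp_comp π₁).add (hF₂.subtypeL_comp_comp π₂), ?_⟩
  calc (X₁.subtypeL ∘L S₁ ∘L π₁ + X₂.subtypeL ∘L S₂ ∘L π₂) ∘L A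
      = X₁.subtypeL ∘L (S₁ ∘L restrictCLM A X₁ (rangeInv hc)) ∘L π₁
        + X₂.subtypeL ∘L (S₂ ∘L restrictCLM A X₂ (kerInv hc)) ∘L π₂ := by
        simp only [add_comp, ContinuousLinearMap.comp_assoc, hπ₁, hπ₂]
    _ = (X₁.subtypeL ∘L π₁ + X₂.subtypeL ∘L π₂)
        + (X₁.subtypeL ∘L F₁ ∘L π₁ + X₂.subtypeL ∘L F₂ ∘L π₂) := by
        rw [hS₁, hS₂, add_comp, add_comp, comp_add, comp_add, one_def, one_def,
          ContinuousLinearMap.id_comp, ContinuousLinearMap.id_comp]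
        abel
    _ = _ := by rw [hπ]

end Decomposition

section Restriction

variable {X : Type*} [NormedAddCommGroup X] [NormedSpace ℂ X] {P T : X →L[ℂ] X}

theorem restrictCLM_add_range_self (hP : P ∘L P = P) (hc : T ∘L P = P ∘L T)
    (h : ∀ x : LinearMap.range (P : X →ₗ[ℂ] X), (T + P) ↑x ∈ LinearMap.range (P : X →ₗ[ℂ] X)) :
    restrictCLM (T + P) _ h = restrictCLM T _ (rangeInv hc) + 1 := by
  ext ⟨_, y, rfl⟩
  exact congr(T (P y) + $hP y)

theorem restrictCLM_add_ker_self (hc : T ∘L P = P ∘L T)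
    (h : ∀ x : LinearMap.ker (P : X →ₗ[ℂ] X), (T + P) ↑x ∈ LinearMap.ker (P : X →ₗ[ℂ] X)) :
    restrictCLM (T + P) _ h = restrictCLM T _ (kerInv hc) := by
  ext ⟨x, hx⟩
  exact congr(T x + $hx).trans (add_zero _)

end Restriction

theorem sum_left_invertible_mod_finite_rank_general
    {X : Type*} [NormedAddCommGroup X] [NormedSpace ℂ X] [CompleteSpace X]
    (P T : X →L[ℂ] X) (hP : P ∘L P = P) (hc : T ∘L P = P ∘L T)
    (h1 : IsRiesz (restrictCLM T (LinearMap.range (P : X →ₗ[ℂ] X)) (rangeInv hc)))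
    (h2inv : ∃ (S₂ F₂ : LinearMap.ker (P : X →ₗ[ℂ] X) →L[ℂ] LinearMap.ker (P : X →ₗ[ℂ] X)), FinRank F₂ ∧
      S₂ ∘L restrictCLM T (LinearMap.ker (P : X →ₗ[ℂ] X)) (kerInv hc) = 1 + F₂) :
    ∃ (S F : X →L[ℂ] X), FinRank F ∧ S ∘L (T + P) = 1 + F := by
  have hcP : (T + P) ∘L P = P ∘L (T + P) := by
    rw [add_comp, comp_add, hc, hP]
  have : CompleteSpace (LinearMap.range (P : X →ₗ[ℂ] X)) :=
    (IsIdempotentElem.isClosed_range hP).completeSpace_coe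
  refine HasLeftInverseModFinRank.of_restrict_range_ker hP hcP ?_ ?_
  · rw [restrictCLM_add_range_self hP hc]
    exact h1.isFredholm_add_one.hasLeftInverseModFinRank
  · rwa [restrictCLM_add_ker_self hc]

/-- If `P` is an idempotent commuting with `T`, `T₁ = T|_{R(P)}` is Riesz
and `T₂ = T|_{N(P)}` is upper semi-Fredholm with a left inverse modulo finite rank operators,
then `T + P` has a left inverse modulo finite rank operators on `X`. -/
theorem sum_left_invertible_mod_finite_rank
    {X : Type*} [NormedAddCommGroup X] [NormedSpace ℂ X] [CompleteSpace X]
    (P T : X →L[ℂ] X) (hP : P ∘L P = P) (hc : T ∘L P = P ∘L T)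
    (h1 : IsRiesz (restrictCLM T (LinearMap.range (P : X →ₗ[ℂ] X)) (rangeInv hc)))
    (h2ker : FiniteDimensional ℂ
      (LinearMap.ker ((restrictCLM T (LinearMap.ker (P : X →ₗ[ℂ] X)) (kerInv hc) :
        LinearMap.ker (P : X →ₗ[ℂ] X) →ₗ[ℂ] LinearMap.ker (P : X →ₗ[ℂ] X)))))
    (h2cl : IsClosed (LinearMap.range ((restrictCLM T (LinearMap.ker (P : X →ₗ[ℂ] X)) (kerInv hc) :
      LinearMap.ker (P : X →ₗ[ℂ] X) →ₗ[ℂ] LinearMap.ker (P : X →ₗ[ℂ] X))) :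
      Set (LinearMap.ker (P : X →ₗ[ℂ] X))))
    (h2inv : ∃ (S₂ F₂ : LinearMap.ker (P : X →ₗ[ℂ] X) →L[ℂ] LinearMap.ker (P : X →ₗ[ℂ] X)), FinRank F₂ ∧
      S₂ ∘L restrictCLM T (LinearMap.ker (P : X →ₗ[ℂ] X)) (kerInv hc) = 1 + F₂) :
    ∃ (S F : X →L[ℂ] X), FinRank F ∧ S ∘L (T + P) = 1 + F :=
  sum_left_invertible_mod_finite_rank_general P T hP hc h1 h2inv
end

section
/- Let X be a Banach space, K a compact operator, P an idempotent bounded operator, and T = I − P + K. Then there exist a bounded operator S and compact operators K₁, K₂ with S(T + P) = I + K₁ and (T + P)S = I + K₂, the operator TP − PT is compact, and PT + λI is Fredholm for every nonzero scalar λ (i.e., PT is Riesz up to compact perturbation). Hence T is a pseudo B-Fredholm operator with associated idempotent P. -/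
/-!
The identity `T + P = I + K` makes `T + P` invertible modulo compacts with inverse `I`, while
`TP - PT = KP - PK` and `PT = PK` are compact because `P² = P`. So everything reduces to the
Riesz–Schauder fact that `C + λI` is Fredholm for `C` compact and `λ ≠ 0`. Its kernel and
cokernel are finite dimensional because `C` acts as `-λ` on each of them, which makes the
identity of those spaces compact; its range is closed because `C + λI` is bounded below on a
closed complement of its kernel, a normalised sequence violating this having a convergent
subsequence whose limit would be a unit vector of the kernel.
-/

open ContinuousLinearMap

open Filter Topology

theorem exists_seq_norm_eq_one_tendsto_zero_of_not_antilipschitz {𝕜 E F : Type*} [RCLike 𝕜]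
    [NormedAddCommGroup E] [NormedSpace 𝕜 E] [NormedAddCommGroup F] [NormedSpace 𝕜 F]
    {f : E →L[𝕜] F} (hf : ¬ ∃ K, AntilipschitzWith K f) :
    ∃ u : ℕ → E, (∀ n, ‖u n‖ = 1) ∧ Tendsto (fun n => f (u n)) atTop (𝓝 0) := by
  have hbad : ∀ n : ℕ, ∃ x, ‖x‖ = 1 ∧ (n + 1) * ‖f x‖ < 1 := fun n => by
    by_contra! h
    exact hf ⟨n + 1, antilipschitz_of_bound_of_norm_one f (by exact_mod_cast h)⟩
  choose u hu_norm hu_small using hbad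
  refine ⟨u, hu_norm, squeeze_zero_norm (fun n => ?_) tendsto_one_div_add_atTop_nhds_zero_nat⟩
  rw [le_div_iff₀ (by positivity), mul_comm]
  exact (hu_small n).le

namespace IsCompactOperator

theorem of_comp_isOpenMap {X Y Z : Type*} [TopologicalSpace X] [TopologicalSpace Y]
    [TopologicalSpace Z] [Zero X] [Zero Y] {f : Y → Z} {g : X → Y}
    (hg : IsOpenMap g) (hg0 : g 0 = 0) (h : IsCompactOperator (f ∘ g)) :
    IsCompactOperator f :=
  let ⟨K, hK, hKfg⟩ := h
  ⟨K, hK, mem_of_superset (hg0 ▸ hg.image_mem_nhds hKfg) (Set.image_preimage_subset g _)⟩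

section NontriviallyNormedField

variable {𝕜 X : Type*} [NontriviallyNormedField 𝕜] [NormedAddCommGroup X] [NormedSpace 𝕜 X]
  {C : X →L[𝕜] X} {c : 𝕜}

theorem finiteDimensional_ker_add_smul_one [CompleteSpace 𝕜] (hC : IsCompactOperator C)
    (hc : c ≠ 0) :
    FiniteDimensional 𝕜 (LinearMap.ker ((C + c • 1 : X →L[𝕜] X) : X →ₗ[𝕜] X)) := by
  set N := LinearMap.ker ((C + c • 1 : X →L[𝕜] X) : X →ₗ[𝕜] X)
  have hCN : ∀ x : N, C x = (-c) • (x : X) := fun x => by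
    have : C x + c • (x : X) = 0 := x.2
    rw [neg_smul, eq_neg_iff_add_eq_zero, this]
  have hN : IsClosed (N : Set X) := (C + c • 1).isClosed_ker
  have hmaps : ∀ x : N, (C ∘ N.subtypeL) x ∈ N := fun x => by
    simpa [hCN] using N.smul_mem (-c) x.2
  have hrestr := (hC.comp_clm N.subtypeL).codRestrict hmaps hN
  have hid : (id : N → N) = (-c)⁻¹ • Set.codRestrict (C ∘ N.subtypeL) N hmaps := by
    funext x
    ext
    change (x : X) = (-c)⁻¹ • C x
    rw [hCN, smul_smul, inv_mul_cancel₀ (neg_ne_zero.mpr hc), one_smul]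
  exact .of_isCompactOperator_id (hid ▸ hrestr.smul (-c)⁻¹)

theorem finiteDimensional_quotient_range_add_smul_one [CompleteSpace 𝕜]
    (hC : IsCompactOperator C) (hc : c ≠ 0)
    (hR : IsClosed (LinearMap.range ((C + c • 1 : X →L[𝕜] X) : X →ₗ[𝕜] X) : Set X)) :
    FiniteDimensional 𝕜 (X ⧸ LinearMap.range ((C + c • 1 : X →L[𝕜] X) : X →ₗ[𝕜] X)) := by
  set R := LinearMap.range ((C + c • 1 : X →L[𝕜] X) : X →ₗ[𝕜] X)
  have : IsClosed (R : Set X) := hR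
  have hπC : ∀ x, R.mkQ (C x) = (-c) • R.mkQ x := fun x => by
    rw [← map_smul, Submodule.mkQ_apply, Submodule.mkQ_apply, Submodule.Quotient.eq]
    exact ⟨x, by simp⟩
  have hid : (id : X ⧸ R → X ⧸ R) ∘ R.mkQ = (-c)⁻¹ • (R.mkQ ∘ C) := by
    funext x
    simp [hπC, hc]
  refine .of_isCompactOperator_id (of_comp_isOpenMap R.isOpenMap_mkQ (map_zero _) ?_)
  exact hid ▸ (hC.continuous_comp R.mkQL.continuous).smul (-c)⁻¹

theorem exists_tendsto_subseq_of_tendsto_add_smul_one (hC : IsCompactOperator C) (hc : c ≠ 0)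
    {u : ℕ → X} {r : ℝ} (hu : ∀ n, ‖u n‖ ≤ r) {y : X}
    (hy : Tendsto (fun n => (C + c • 1) (u n)) atTop (𝓝 y)) :
    ∃ φ : ℕ → ℕ, StrictMono φ ∧ ∃ x, Tendsto (u ∘ φ) atTop (𝓝 x) := by
  obtain ⟨K, hK, hCK⟩ := hC.image_closedBall_subset_compact r
  obtain ⟨z, -, φ, hφ, hz⟩ :=
    hK.tendsto_subseq fun n => hCK ⟨u n, mem_closedBall_zero_iff.mpr (hu n), rfl⟩
  refine ⟨φ, hφ, c⁻¹ • (y - z), ?_⟩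
  have hlim := ((hy.comp hφ.tendsto_atTop).sub hz).const_smul c⁻¹
  convert hlim using 2 with n
  simp [hc]

end NontriviallyNormedField

section RCLike

variable {𝕜 X : Type*} [RCLike 𝕜] [NormedAddCommGroup X] [NormedSpace 𝕜 X]
  {C : X →L[𝕜] X} {c : 𝕜}

theorem exists_antilipschitzWith_add_smul_one_comp_subtypeL (hC : IsCompactOperator C)
    (hc : c ≠ 0) {q : Submodule 𝕜 X} (hq : IsClosed (q : Set X))
    (hdisj : Disjoint q (LinearMap.ker ((C + c • 1 : X →L[𝕜] X) : X →ₗ[𝕜] X))) :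
    ∃ K, AntilipschitzWith K ((C + c • 1) ∘L q.subtypeL) := by
  by_contra hnot
  obtain ⟨u, hu_norm, hTu⟩ := exists_seq_norm_eq_one_tendsto_zero_of_not_antilipschitz hnot
  have hu_norm' : ∀ n, ‖(u n : X)‖ = 1 := hu_norm
  obtain ⟨φ, hφ, x, hx⟩ := exists_tendsto_subseq_of_tendsto_add_smul_one hC hc
    (u := fun n => (u n : X)) (fun n => (hu_norm' n).le) hTu
  have hxq : x ∈ q := hq.mem_of_tendsto hx (.of_forall fun n => (u (φ n)).2)
  have hx_norm : ‖x‖ = 1 :=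
    tendsto_nhds_unique hx.norm (by simp only [Function.comp_def, hu_norm', tendsto_const_nhds])
  have hTx : (C + c • 1) x = 0 :=
    tendsto_nhds_unique (((C + c • 1).continuous.tendsto x).comp hx) (hTu.comp hφ.tendsto_atTop)
  have : x = 0 := (Submodule.disjoint_def.mp hdisj) x hxq hTx
  simp [this] at hx_norm

theorem isClosed_range_add_smul_one [CompleteSpace X] (hC : IsCompactOperator C) (hc : c ≠ 0) :
    IsClosed (LinearMap.range ((C + c • 1 : X →L[𝕜] X) : X →ₗ[𝕜] X) : Set X) := by
  set T := C + c • (1 : X →L[𝕜] X)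
  have := hC.finiteDimensional_ker_add_smul_one hc
  obtain ⟨-, q, hq, hcompl⟩ :=
    Submodule.closedComplemented_iff_isClosed_exists_isClosed_isCompl.mp
      (Submodule.ClosedComplemented.of_finiteDimensional (LinearMap.ker (T : X →ₗ[𝕜] X)))
  obtain ⟨K, hK⟩ :=
    hC.exists_antilipschitzWith_add_smul_one_comp_subtypeL hc hq hcompl.symm.disjoint
  have : CompleteSpace q := hq.completeSpace_coe
  have hrange : LinearMap.range (T : X →ₗ[𝕜] X) = q.map (T : X →ₗ[𝕜] X) :=
    le_antisymm (LinearMap.range_eq_map (T : X →ₗ[𝕜] X) ▸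
      (LinearMap.map_le_map_iff _).mpr hcompl.symm.sup_eq_top.ge) LinearMap.map_le_range
  have himage : Set.range (T ∘L q.subtypeL) = T '' q := by
    rw [ContinuousLinearMap.coe_comp, Set.range_comp]
    simp
  rw [hrange, Submodule.map_coe]
  exact himage ▸ hK.isClosed_range (T ∘L q.subtypeL).uniformContinuous

end RCLike

theorem isFredholm_add_smul_one {X : Type*} [NormedAddCommGroup X] [NormedSpace ℂ X]
    [CompleteSpace X] {C : X →L[ℂ] X} (hC : IsCompactOperator C) {c : ℂ} (hc : c ≠ 0) :
    _root_.IsFredholm (C + c • 1) :=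
  have hR := hC.isClosed_range_add_smul_one hc
  ⟨hC.finiteDimensional_ker_add_smul_one hc, hR,
    hC.finiteDimensional_quotient_range_add_smul_one hc hR⟩

end IsCompactOperator

/-- Let `K` be compact, `P` idempotent and `T = I - P + K`. Then `T + P`
is invertible modulo compact operators, `TP - PT` is compact and `PT + λI` is Fredholm for
every nonzero `λ`; hence `T` is a pseudo B-Fredholm operator with associated idempotent
`P`. -/
theorem identity_sub_idempotent_pseudo_BFredholm
    {X : Type*} [NormedAddCommGroup X] [NormedSpace ℂ X] [CompleteSpace X]
    (P K T : X →L[ℂ] X) (hP : P ∘L P = P) (hK : IsCompactOperator ⇑K)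
    (hT : T = 1 - P + K) :
    (∃ (S K₁ K₂ : X →L[ℂ] X), IsCompactOperator ⇑K₁ ∧ IsCompactOperator ⇑K₂ ∧
      S ∘L (T + P) = 1 + K₁ ∧ (T + P) ∘L S = 1 + K₂) ∧
    IsCompactOperator ⇑(T ∘L P - P ∘L T) ∧
    (∀ c : ℂ, c ≠ 0 → _root_.IsFredholm (P ∘L T + c • (1 : X →L[ℂ] X))) := by
  have hPP : P * P = P := hP
  have hTP : T + P = 1 + K := by rw [hT]; abel
  have hPT : P ∘L T = P ∘L K := by
    rw [hT, ← mul_def, ← mul_def, mul_add, mul_sub, mul_one, hPP, sub_self, zero_add]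
  have hcomm : T ∘L P - P ∘L T = K ∘L P - P ∘L K := by
    rw [hPT, hT, ← mul_def, ← mul_def, ← mul_def, add_mul, sub_mul, one_mul, hPP, sub_self,
      zero_add]
  have hPK : IsCompactOperator (P ∘L K) := hK.clm_comp P
  refine ⟨⟨1, K, K, hK, hK, ?_, ?_⟩, hcomm ▸ (hK.comp_clm P).sub hPK,
    fun c hc => hPT ▸ hPK.isFredholm_add_smul_one hc⟩
  · rw [hTP, ← mul_def, one_mul]
  · rw [hTP, ← mul_def, mul_one]
end
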